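/- Let k be a field and L ⊆ ℤ⁴ the subgroup generated by (1,0,−1,0) and (0,1,1,−1) (the lattice of principal divisors of the blow-up of ℙ² at a torus-fixed point, with rays (1,0), (0,1), (−1,1), (0,−1)). Then the Lawrence ideal J_L ⊆ S = k[x₁,x₂,x₃,x₄,y₁,y₂,y₃,y₄] equals the ideal generated by the three binomials x₁y₃ − x₃y₁, x₄y₂y₃ − x₂x₃y₄, and x₁x₂y₄ − x₄y₁y₂. -/

import Mathlib

/-!
STATEMENT 4: for `L = ⟨(1,0,−1,0), (0,1,1,−1)⟩ ⊆ ℤ⁴` (the lattice of principal divisors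
of `Bl_p ℙ²` with rays `(1,0), (0,1), (−1,1), (0,−1)`), the Lawrence ideal `J_L` equals
`⟨x₁y₃ − x₃y₁, x₄y₂y₃ − x₂x₃y₄, x₁x₂y₄ − x₄y₁y₂⟩`.
-/

noncomputable section

open MvPolynomial

/-- The polynomial ring `S = k[x₁,…,x₄,y₁,…,y₄]`; `Sum.inl i ↦ xᵢ₊₁`, `Sum.inr i ↦ yᵢ₊₁`. -/
abbrev PolyS (k : Type*) [Field k] := MvPolynomial (Fin 4 ⊕ Fin 4) k

/-- `xᵢ₊₁` (0-indexed). -/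
def xv (k : Type*) [Field k] (i : Fin 4) : PolyS k := X (Sum.inl i)

/-- `yᵢ₊₁` (0-indexed). -/
def yv (k : Type*) [Field k] (i : Fin 4) : PolyS k := X (Sum.inr i)

/-- The monomial `x^a y^b ∈ S`. -/
def xymon (k : Type*) [Field k] (a b : Fin 4 → ℕ) : PolyS k :=
  (∏ i, xv k i ^ a i) * ∏ i, yv k i ^ b i

/-- The Lawrence ideal `J_L = ⟨x^a y^b - x^b y^a : a - b ∈ L⟩ ⊆ S`. -/
def lawrenceIdeal (k : Type*) [Field k] (L : AddSubgroup (Fin 4 → ℤ)) :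
    Ideal (PolyS k) :=
  Ideal.span { f | ∃ a b : Fin 4 → ℕ,
    ((fun i => (a i : ℤ)) - (fun i => (b i : ℤ))) ∈ L ∧
    f = xymon k a b - xymon k b a }

namespace LawrenceAux

@[simp] lemma finsucc2 : (Fin.succ 2 : Fin 4) = 3 := rfl

/-- The target ideal. -/
def tI (k : Type*) [Field k] : Ideal (PolyS k) :=
  Ideal.span
    { xv k 0 * yv k 2 - xv k 2 * yv k 0,
      xv k 3 * yv k 1 * yv k 2 - xv k 1 * xv k 2 * yv k 3,
      xv k 0 * xv k 1 * yv k 3 - xv k 3 * yv k 0 * yv k 1 }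

variable (k : Type*) [Field k]

lemma xymon_mul (a b a' b' : Fin 4 → ℕ) :
    xymon k a b * xymon k a' b' = xymon k (a + a') (b + b') := by
  simp only [xymon, Pi.add_apply, pow_add, Finset.prod_mul_distrib]; ring

lemma g1_eq : xymon k ![1,0,0,0] ![0,0,1,0] - xymon k ![0,0,1,0] ![1,0,0,0]
    = xv k 0 * yv k 2 - xv k 2 * yv k 0 := by
  simp [xymon, Fin.prod_univ_four]

lemma g2_eq : xymon k ![0,1,1,0] ![0,0,0,1] - xymon k ![0,0,0,1] ![0,1,1,0]
    = -(xv k 3 * yv k 1 * yv k 2 - xv k 1 * xv k 2 * yv k 3) := by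
  simp [xymon, Fin.prod_univ_four]; ring

lemma g3_eq : xymon k ![1,1,0,0] ![0,0,0,1] - xymon k ![0,0,0,1] ![1,1,0,0]
    = xv k 0 * xv k 1 * yv k 3 - xv k 3 * yv k 0 * yv k 1 := by
  simp [xymon, Fin.prod_univ_four]; ring

lemma g1_mem : xymon k ![1,0,0,0] ![0,0,1,0] - xymon k ![0,0,1,0] ![1,0,0,0] ∈ tI k := by
  rw [g1_eq]; exact Ideal.subset_span (Set.mem_insert _ _)

lemma g2_mem : xymon k ![0,1,1,0] ![0,0,0,1] - xymon k ![0,0,0,1] ![0,1,1,0] ∈ tI k := by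
  rw [g2_eq]
  exact neg_mem (Ideal.subset_span (Set.mem_insert_of_mem _ (Set.mem_insert _ _)))

lemma g3_mem : xymon k ![1,1,0,0] ![0,0,0,1] - xymon k ![0,0,0,1] ![1,1,0,0] ∈ tI k := by
  rw [g3_eq]
  exact Ideal.subset_span
    (Set.mem_insert_of_mem _ (Set.mem_insert_of_mem _ rfl))

/-- One reduction step. -/
lemma step (c d e f δp δm : Fin 4 → ℕ)
    (hg : xymon k δp δm - xymon k δm δp ∈ tI k)
    (hc : ∀ i, δp i ≤ c i) (hd : ∀ i, δm i ≤ d i)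
    (hIH : xymon k (c - δp + δm) (d - δm + δp) - xymon k e f ∈ tI k) :
    xymon k c d - xymon k e f ∈ tI k := by
  have h1 : xymon k (c - δp) (d - δm) * xymon k δp δm = xymon k c d := by
    rw [xymon_mul]; congr 1 <;> funext i <;>
      [skip; skip] <;> [have := hc i; have := hd i] <;>
      simp only [Pi.add_apply, Pi.sub_apply] <;> omega
  have h2 : xymon k (c - δp) (d - δm) * xymon k δm δp
      = xymon k (c - δp + δm) (d - δm + δp) := xymon_mul ..
  have key : xymon k c d - xymon k e f
      = xymon k (c - δp) (d - δm) * (xymon k δp δm - xymon k δm δp)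
        + (xymon k (c - δp + δm) (d - δm + δp) - xymon k e f) := by
    rw [mul_sub, h1, h2]; ring
  rw [key]
  exact add_mem (Ideal.mul_mem_left _ _ hg) hIH

set_option maxHeartbeats 4000000 in
lemma main : ∀ N : ℕ, ∀ c d e f : Fin 4 → ℕ,
    4 * c 0 + c 1 + 2 * c 2 + (4 * e 0 + e 1 + 2 * e 2) ≤ N →
    (∀ i, c i + d i = e i + f i) →
    (c 2 : ℤ) - e 2 = ((c 1 : ℤ) - e 1) - ((c 0 : ℤ) - e 0) →
    (c 3 : ℤ) - e 3 = -((c 1 : ℤ) - e 1) →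
    xymon k c d - xymon k e f ∈ tI k := by
  intro N
  induction N using Nat.strong_induction_on with
  | _ N IH =>
    intro c d e f hN hcd h2 h3
    have H0 := hcd 0; have H1 := hcd 1; have H2 := hcd 2; have H3 := hcd 3
    rcases Nat.lt_trichotomy (e 0) (c 0) with hs | hs | hs
    · rcases Nat.lt_trichotomy (e 1) (c 1) with ht | ht | ht
      · -- s>0, t>0 : δ3 on c-side
        apply step k c d e f ![1,1,0,0] ![0,0,0,1] (g3_mem k)
          (by intro i; fin_cases i <;> simp [Matrix.vecHead, Matrix.vecTail] <;> omega)
          (by intro i; fin_cases i <;> simp [Matrix.vecHead, Matrix.vecTail] <;> omega)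
        exact IH (4 * (c 0 - 1) + (c 1 - 1) + 2 * c 2 + (4 * e 0 + e 1 + 2 * e 2))
          (by omega) _ _ _ _
          (by simp [Matrix.vecHead, Matrix.vecTail] <;> omega)
          (by intro i; fin_cases i <;> simp [Matrix.vecHead, Matrix.vecTail] <;> omega)
          (by simp [Matrix.vecHead, Matrix.vecTail] <;> omega)
          (by simp [Matrix.vecHead, Matrix.vecTail] <;> omega)
      · -- s>0, t=0 : δ1 on c-side
        apply step k c d e f ![1,0,0,0] ![0,0,1,0] (g1_mem k)
          (by intro i; fin_cases i <;> simp [Matrix.vecHead, Matrix.vecTail] <;> omega)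
          (by intro i; fin_cases i <;> simp [Matrix.vecHead, Matrix.vecTail] <;> omega)
        exact IH (4 * (c 0 - 1) + c 1 + 2 * (c 2 + 1) + (4 * e 0 + e 1 + 2 * e 2))
          (by omega) _ _ _ _
          (by simp [Matrix.vecHead, Matrix.vecTail] <;> omega)
          (by intro i; fin_cases i <;> simp [Matrix.vecHead, Matrix.vecTail] <;> omega)
          (by simp [Matrix.vecHead, Matrix.vecTail] <;> omega)
          (by simp [Matrix.vecHead, Matrix.vecTail] <;> omega)
      · -- s>0, t<0 : δ1 on c-side
        apply step k c d e f ![1,0,0,0] ![0,0,1,0] (g1_mem k)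
          (by intro i; fin_cases i <;> simp [Matrix.vecHead, Matrix.vecTail] <;> omega)
          (by intro i; fin_cases i <;> simp [Matrix.vecHead, Matrix.vecTail] <;> omega)
        exact IH (4 * (c 0 - 1) + c 1 + 2 * (c 2 + 1) + (4 * e 0 + e 1 + 2 * e 2))
          (by omega) _ _ _ _
          (by simp [Matrix.vecHead, Matrix.vecTail] <;> omega)
          (by intro i; fin_cases i <;> simp [Matrix.vecHead, Matrix.vecTail] <;> omega)
          (by simp [Matrix.vecHead, Matrix.vecTail] <;> omega)
          (by simp [Matrix.vecHead, Matrix.vecTail] <;> omega)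
    · rcases Nat.lt_trichotomy (e 1) (c 1) with ht | ht | ht
      · -- s=0, t>0 : δ2 on c-side
        apply step k c d e f ![0,1,1,0] ![0,0,0,1] (g2_mem k)
          (by intro i; fin_cases i <;> simp [Matrix.vecHead, Matrix.vecTail] <;> omega)
          (by intro i; fin_cases i <;> simp [Matrix.vecHead, Matrix.vecTail] <;> omega)
        exact IH (4 * c 0 + (c 1 - 1) + 2 * (c 2 - 1) + (4 * e 0 + e 1 + 2 * e 2))
          (by omega) _ _ _ _
          (by simp [Matrix.vecHead, Matrix.vecTail] <;> omega)
          (by intro i; fin_cases i <;> simp [Matrix.vecHead, Matrix.vecTail] <;> omega)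
          (by simp [Matrix.vecHead, Matrix.vecTail] <;> omega)
          (by simp [Matrix.vecHead, Matrix.vecTail] <;> omega)
      · -- s=0, t=0 : base case
        have hc2 : c 2 = e 2 := by omega
        have hc3 : c 3 = e 3 := by omega
        have hd0 : d 0 = f 0 := by omega
        have hd1 : d 1 = f 1 := by omega
        have hd2 : d 2 = f 2 := by omega
        have hd3 : d 3 = f 3 := by omega
        have hcE : c = e := by
          funext i; fin_cases i
          · exact hs.symm
          · exact ht.symm
          · exact hc2
          · exact hc3
        have hdF : d = f := by
          funext i; fin_cases i
          · exact hd0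
          · exact hd1
          · exact hd2
          · exact hd3
        rw [hcE, hdF]; simp
      · -- s=0, t<0 : δ2 on e-side
        have hneg : xymon k c d - xymon k e f = -(xymon k e f - xymon k c d) := by ring
        rw [hneg]; apply neg_mem
        apply step k e f c d ![0,1,1,0] ![0,0,0,1] (g2_mem k)
          (by intro i; fin_cases i <;> simp [Matrix.vecHead, Matrix.vecTail] <;> omega)
          (by intro i; fin_cases i <;> simp [Matrix.vecHead, Matrix.vecTail] <;> omega)
        have hneg2 : xymon k (e - ![0,1,1,0] + ![0,0,0,1]) (f - ![0,0,0,1] + ![0,1,1,0])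
            - xymon k c d
            = -(xymon k c d - xymon k (e - ![0,1,1,0] + ![0,0,0,1])
                (f - ![0,0,0,1] + ![0,1,1,0])) := by ring
        rw [hneg2]; apply neg_mem
        exact IH (4 * c 0 + c 1 + 2 * c 2 + (4 * e 0 + (e 1 - 1) + 2 * (e 2 - 1)))
          (by omega) _ _ _ _
          (by simp [Matrix.vecHead, Matrix.vecTail] <;> omega)
          (by intro i; fin_cases i <;> simp [Matrix.vecHead, Matrix.vecTail] <;> omega)
          (by simp [Matrix.vecHead, Matrix.vecTail] <;> omega)
          (by simp [Matrix.vecHead, Matrix.vecTail] <;> omega)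
    · rcases Nat.lt_trichotomy (e 1) (c 1) with ht | ht | ht
      · -- s<0, t>0 : δ2 on c-side
        apply step k c d e f ![0,1,1,0] ![0,0,0,1] (g2_mem k)
          (by intro i; fin_cases i <;> simp [Matrix.vecHead, Matrix.vecTail] <;> omega)
          (by intro i; fin_cases i <;> simp [Matrix.vecHead, Matrix.vecTail] <;> omega)
        exact IH (4 * c 0 + (c 1 - 1) + 2 * (c 2 - 1) + (4 * e 0 + e 1 + 2 * e 2))
          (by omega) _ _ _ _
          (by simp [Matrix.vecHead, Matrix.vecTail] <;> omega)
          (by intro i; fin_cases i <;> simp [Matrix.vecHead, Matrix.vecTail] <;> omega)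
          (by simp [Matrix.vecHead, Matrix.vecTail] <;> omega)
          (by simp [Matrix.vecHead, Matrix.vecTail] <;> omega)
      · -- s<0, t=0 : δ1 on e-side
        have hneg : xymon k c d - xymon k e f = -(xymon k e f - xymon k c d) := by ring
        rw [hneg]; apply neg_mem
        apply step k e f c d ![1,0,0,0] ![0,0,1,0] (g1_mem k)
          (by intro i; fin_cases i <;> simp [Matrix.vecHead, Matrix.vecTail] <;> omega)
          (by intro i; fin_cases i <;> simp [Matrix.vecHead, Matrix.vecTail] <;> omega)
        have hneg2 : xymon k (e - ![1,0,0,0] + ![0,0,1,0]) (f - ![0,0,1,0] + ![1,0,0,0])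
            - xymon k c d
            = -(xymon k c d - xymon k (e - ![1,0,0,0] + ![0,0,1,0])
                (f - ![0,0,1,0] + ![1,0,0,0])) := by ring
        rw [hneg2]; apply neg_mem
        exact IH (4 * c 0 + c 1 + 2 * c 2 + (4 * (e 0 - 1) + e 1 + 2 * (e 2 + 1)))
          (by omega) _ _ _ _
          (by simp [Matrix.vecHead, Matrix.vecTail] <;> omega)
          (by intro i; fin_cases i <;> simp [Matrix.vecHead, Matrix.vecTail] <;> omega)
          (by simp [Matrix.vecHead, Matrix.vecTail] <;> omega)
          (by simp [Matrix.vecHead, Matrix.vecTail] <;> omega)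
      · -- s<0, t<0 : δ3 on e-side
        have hneg : xymon k c d - xymon k e f = -(xymon k e f - xymon k c d) := by ring
        rw [hneg]; apply neg_mem
        apply step k e f c d ![1,1,0,0] ![0,0,0,1] (g3_mem k)
          (by intro i; fin_cases i <;> simp [Matrix.vecHead, Matrix.vecTail] <;> omega)
          (by intro i; fin_cases i <;> simp [Matrix.vecHead, Matrix.vecTail] <;> omega)
        have hneg2 : xymon k (e - ![1,1,0,0] + ![0,0,0,1]) (f - ![0,0,0,1] + ![1,1,0,0])
            - xymon k c d
            = -(xymon k c d - xymon k (e - ![1,1,0,0] + ![0,0,0,1])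
                (f - ![0,0,0,1] + ![1,1,0,0])) := by ring
        rw [hneg2]; apply neg_mem
        exact IH (4 * c 0 + c 1 + 2 * c 2 + (4 * (e 0 - 1) + (e 1 - 1) + 2 * e 2))
          (by omega) _ _ _ _
          (by simp [Matrix.vecHead, Matrix.vecTail] <;> omega)
          (by intro i; fin_cases i <;> simp [Matrix.vecHead, Matrix.vecTail] <;> omega)
          (by simp [Matrix.vecHead, Matrix.vecTail] <;> omega)
          (by simp [Matrix.vecHead, Matrix.vecTail] <;> omega)

lemma memL_char (v : Fin 4 → ℤ)
    (h : v ∈ AddSubgroup.closure {![1, 0, -1, 0], ![0, 1, 1, -1]}) :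
    v 2 = v 1 - v 0 ∧ v 3 = -v 1 := by
  induction h using AddSubgroup.closure_induction with
  | mem x hx => rcases hx with h | h <;> subst h <;> constructor <;> rfl
  | zero => constructor <;> rfl
  | add x y hx hy ihx ihy => simp only [Pi.add_apply]; omega
  | neg x hx ih => simp only [Pi.neg_apply]; omega

end LawrenceAux

open LawrenceAux in
theorem lawrenceIdeal_blowup_P2 (k : Type*) [Field k] :
    lawrenceIdeal k (AddSubgroup.closure {![1, 0, -1, 0], ![0, 1, 1, -1]})
      = Ideal.span
          { xv k 0 * yv k 2 - xv k 2 * yv k 0,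
            xv k 3 * yv k 1 * yv k 2 - xv k 1 * xv k 2 * yv k 3,
            xv k 0 * xv k 1 * yv k 3 - xv k 3 * yv k 0 * yv k 1 } := by
  apply le_antisymm
  · rw [lawrenceIdeal]
    apply Ideal.span_le.mpr
    rintro g ⟨a, b, hL, rfl⟩
    obtain ⟨h2, h3⟩ := memL_char _ hL
    simp only [Pi.sub_apply] at h2 h3
    exact main k (4 * a 0 + a 1 + 2 * a 2 + (4 * b 0 + b 1 + 2 * b 2)) a b b a
      le_rfl (fun i => add_comm _ _) h2 h3
  · apply Ideal.span_le.mpr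
    rintro g (rfl | rfl | rfl)
    · apply Ideal.subset_span
      refine ⟨![1,0,0,0], ![0,0,1,0], ?_, (g1_eq k).symm⟩
      have : ((fun i => (((![1,0,0,0] : Fin 4 → ℕ)) i : ℤ))
          - fun i => (((![0,0,1,0] : Fin 4 → ℕ)) i : ℤ)) = ![1, 0, -1, 0] := by
        funext i; fin_cases i <;> rfl
      rw [this]
      exact AddSubgroup.subset_closure (Set.mem_insert _ _)
    · apply Ideal.subset_span
      refine ⟨![0,0,0,1], ![0,1,1,0], ?_, ?_⟩
      · have : ((fun i => (((![0,0,0,1] : Fin 4 → ℕ)) i : ℤ))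
            - fun i => (((![0,1,1,0] : Fin 4 → ℕ)) i : ℤ)) = -![0, 1, 1, -1] := by
          funext i; fin_cases i <;> rfl
        rw [this]
        exact neg_mem (AddSubgroup.subset_closure
          (Set.mem_insert_of_mem _ rfl))
      · have := g2_eq k
        have h2 : xymon k ![0,0,0,1] ![0,1,1,0] - xymon k ![0,1,1,0] ![0,0,0,1]
            = xv k 3 * yv k 1 * yv k 2 - xv k 1 * xv k 2 * yv k 3 := by
          rw [show xymon k ![0,0,0,1] ![0,1,1,0] - xymon k ![0,1,1,0] ![0,0,0,1]
            = -(xymon k ![0,1,1,0] ![0,0,0,1] - xymon k ![0,0,0,1] ![0,1,1,0]) by ring,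
            g2_eq]; ring
        exact h2.symm
    · apply Ideal.subset_span
      refine ⟨![1,1,0,0], ![0,0,0,1], ?_, (g3_eq k).symm⟩
      have : ((fun i => (((![1,1,0,0] : Fin 4 → ℕ)) i : ℤ))
          - fun i => (((![0,0,0,1] : Fin 4 → ℕ)) i : ℤ))
          = ![1, 0, -1, 0] + ![0, 1, 1, -1] := by
        funext i; fin_cases i <;> rfl
      rw [this]
      exact add_mem (AddSubgroup.subset_closure (Set.mem_insert _ _))
        (AddSubgroup.subset_closure (Set.mem_insert_of_mem _ rfl))

end
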